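/- arXiv:0712.2084 — 3 statements merged into one kernel-verified Lean document; each statement's English description precedes it below -/
import Mathlib

section
/- For every k ≥ 2, the set F_k of diagonal unitaries belonging to C_k is a group: it is closed under products and inverses. -/
open Matrix Complex

/-- Index type for `n`-qubit computational basis states. -/
abbrev Q (n : ℕ) := Fin n → Fin 2

/-- The four single-qubit Pauli matrices I, X, Y, Z. -/
noncomputable def pauli1 : Fin 4 → Matrix (Fin 2) (Fin 2) ℂ :=
  ![1, !![0, 1; 1, 0], !![0, -Complex.I; Complex.I, 0], !![1, 0; 0, -1]]

/-- The tensor product of `n` single-qubit operators. -/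
noncomputable def tensorOp {n : ℕ} (f : Fin n → Matrix (Fin 2) (Fin 2) ℂ) :
    Matrix (Q n) (Q n) ℂ :=
  Matrix.of fun x y => ∏ i, f i (x i) (y i)

/-- The `n`-qubit Pauli group: tensor products of Pauli matrices with phases ±1, ±i. -/
noncomputable def PauliGroup (n : ℕ) : Set (Matrix (Q n) (Q n) ℂ) :=
  { M | ∃ (s : Fin 4) (f : Fin n → Fin 4),
      M = Complex.I ^ (s : ℕ) • tensorOp fun i => pauli1 (f i) }

/-- The Clifford hierarchy: `Ck n 1` is the Pauli group and
`Ck n (k+1) = {U unitary : U P U† ∈ Ck n k for all Paulis P}`. -/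
noncomputable def Ck (n : ℕ) : ℕ → Set (Matrix (Q n) (Q n) ℂ)
  | 0 => PauliGroup n
  | 1 => PauliGroup n
  | (k + 2) => { U | U ∈ Matrix.unitaryGroup (Q n) ℂ ∧
      ∀ P ∈ PauliGroup n, U * P * Uᴴ ∈ Ck n (k + 1) }

/-- The set of diagonal gates in `C_k`. -/
noncomputable def Fk (n k : ℕ) : Set (Matrix (Q n) (Q n) ℂ) :=
  { U ∈ Ck n k | U.IsDiag }

/-! A diagonal unitary `U` conjugates a Pauli `P` into `U P Uᴴ = P D` with `D = (Pᴴ U P) Uᴴ`,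
and `D` is diagonal because every row of a Pauli matrix has a single nonzero entry. If
`U ∈ C_{k+2}`, then `D = Pᴴ (U P Uᴴ)` lies in `F_{k+1}`, as `C_{k+1}` is stable under left
multiplication by Paulis. Since diagonal matrices commute, `(U V) P (U V)ᴴ = P D_U D_V` and
`Uᴴ P U = P D_Uᴴ`, so closure of `F_{k+2}` under products and adjoints follows from that of
`F_{k+1}`; at the bottom, `F_0 = F_1` consists of the diagonal Paulis. -/

namespace Matrix

variable {m n R : Type*} [Fintype m] [DecidableEq m]

theorem IsDiag.mul [NonUnitalNonAssocSemiring R] {A B : Matrix m m R} (hA : A.IsDiag)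
    (hB : B.IsDiag) : (A * B).IsDiag := by
  rw [← hA.diagonal_diag, ← hB.diagonal_diag, diagonal_mul_diagonal]
  exact isDiag_diagonal _

theorem IsDiag.commute [NonUnitalCommSemiring R] {A B : Matrix m m R} (hA : A.IsDiag)
    (hB : B.IsDiag) : Commute A B := by
  rw [Commute, SemiconjBy, ← hA.diagonal_diag, ← hB.diagonal_diag, diagonal_mul_diagonal,
    diagonal_mul_diagonal]
  exact congrArg diagonal (funext fun i => mul_comm _ _)

theorem IsDiag.conjTranspose_mul_mul [NonUnitalSemiring R] [StarRing R] {U : Matrix m m R}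
    {P : Matrix m n R} (hU : U.IsDiag) (hP : ∀ a x y, P a x ≠ 0 → P a y ≠ 0 → x = y) :
    (Pᴴ * U * P).IsDiag := by
  intro x y hxy
  rw [← hU.diagonal_diag, mul_apply]
  refine Finset.sum_eq_zero fun a _ => ?_
  rw [mul_diagonal, conjTranspose_apply]
  by_cases hx : P a x = 0
  · simp [hx]
  by_cases hy : P a y = 0
  · simp [hy]
  exact absurd (hP a x y hx hy) hxy

end Matrix

def pauliMulPhase : Fin 4 → Fin 4 → ℕ :=
  ![![0, 0, 0, 0], ![0, 0, 1, 3], ![0, 3, 0, 1], ![0, 1, 3, 0]]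

def pauliMulIndex : Fin 4 → Fin 4 → Fin 4 :=
  ![![0, 1, 2, 3], ![1, 0, 3, 2], ![2, 3, 0, 1], ![3, 2, 1, 0]]

theorem pauli1_mul (a b : Fin 4) :
    pauli1 a * pauli1 b = I ^ pauliMulPhase a b • pauli1 (pauliMulIndex a b) := by
  fin_cases a <;> fin_cases b <;> ext x y <;> fin_cases x <;> fin_cases y <;>
    simp [pauli1, pauliMulPhase, pauliMulIndex, mul_apply, Fin.sum_univ_two, one_apply]

theorem pauli1_mul_self (a : Fin 4) : pauli1 a * pauli1 a = 1 := by
  rw [pauli1_mul]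
  fin_cases a <;> simp [pauliMulPhase, pauliMulIndex, pauli1]

theorem pauli1_conjTranspose (a : Fin 4) : (pauli1 a)ᴴ = pauli1 a := by
  fin_cases a <;> ext x y <;> fin_cases x <;> fin_cases y <;>
    simp [pauli1, conjTranspose_apply, one_apply]

theorem pauli1_eq_of_ne_zero {a : Fin 4} {r x y : Fin 2} (hx : pauli1 a r x ≠ 0)
    (hy : pauli1 a r y ≠ 0) : x = y := by
  fin_cases a <;> fin_cases r <;> fin_cases x <;> fin_cases y <;> simp_all [pauli1, one_apply]

section TensorOp

variable {n : ℕ}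

theorem tensorOp_mul (f g : Fin n → Matrix (Fin 2) (Fin 2) ℂ) :
    tensorOp f * tensorOp g = tensorOp fun i => f i * g i := by
  ext x y
  simp only [tensorOp, mul_apply, of_apply, ← Finset.prod_mul_distrib]
  exact (Fintype.prod_sum fun i j => f i (x i) j * g i j (y i)).symm

theorem tensorOp_conjTranspose (f : Fin n → Matrix (Fin 2) (Fin 2) ℂ) :
    (tensorOp f)ᴴ = tensorOp fun i => (f i)ᴴ := by
  ext x y
  simp [tensorOp, conjTranspose_apply]

theorem tensorOp_one : tensorOp (fun _ : Fin n => (1 : Matrix (Fin 2) (Fin 2) ℂ)) = 1 := by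
  ext x y
  simp only [tensorOp, of_apply, one_apply]
  by_cases h : x = y
  · simp [h]
  · obtain ⟨i, hi⟩ := Function.ne_iff.mp h
    rw [if_neg h]
    exact Finset.prod_eq_zero (Finset.mem_univ i) (if_neg hi)

theorem tensorOp_smul (c : Fin n → ℂ) (f : Fin n → Matrix (Fin 2) (Fin 2) ℂ) :
    tensorOp (fun i => c i • f i) = (∏ i, c i) • tensorOp f := by
  ext x y
  simp [tensorOp, Finset.prod_mul_distrib]

end TensorOp

namespace PauliGroup

variable {n : ℕ} {P R : Matrix (Q n) (Q n) ℂ}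

theorem smul_tensorOp_mem (N : ℕ) (f : Fin n → Fin 4) :
    I ^ N • tensorOp (fun i => pauli1 (f i)) ∈ PauliGroup n :=
  ⟨⟨N % 4, Nat.mod_lt _ (by norm_num)⟩, f, by rw [I_pow_eq_pow_mod]⟩

theorem one_mem : (1 : Matrix (Q n) (Q n) ℂ) ∈ PauliGroup n := by
  simpa [pauli1, tensorOp_one] using smul_tensorOp_mem (n := n) 0 fun _ => 0

theorem mul_mem (hP : P ∈ PauliGroup n) (hR : R ∈ PauliGroup n) : P * R ∈ PauliGroup n := by
  obtain ⟨s, F, rfl⟩ := hP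
  obtain ⟨t, G, rfl⟩ := hR
  convert smul_tensorOp_mem (s + t + ∑ i, pauliMulPhase (F i) (G i))
    fun i => pauliMulIndex (F i) (G i) using 1
  simp only [smul_mul_smul_comm, tensorOp_mul, pauli1_mul, tensorOp_smul, smul_smul,
    Finset.prod_pow_eq_pow_sum, pow_add]

theorem conjTranspose_mem (hP : P ∈ PauliGroup n) : Pᴴ ∈ PauliGroup n := by
  obtain ⟨s, F, rfl⟩ := hP
  convert smul_tensorOp_mem (3 * s) F using 1
  have conj_I : star I = I ^ 3 := by simp [pow_succ]
  simp only [conjTranspose_smul, tensorOp_conjTranspose, pauli1_conjTranspose, star_pow,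
    conj_I, pow_mul]

theorem mem_unitaryGroup (hP : P ∈ PauliGroup n) : P ∈ unitaryGroup (Q n) ℂ := by
  obtain ⟨s, F, rfl⟩ := hP
  rw [mem_unitaryGroup_iff, star_eq_conjTranspose, conjTranspose_smul, tensorOp_conjTranspose,
    smul_mul_smul_comm, tensorOp_mul]
  simp only [pauli1_conjTranspose, pauli1_mul_self, tensorOp_one, star_pow, ← mul_pow]
  simp

theorem eq_of_ne_zero (hP : P ∈ PauliGroup n) {r x y : Q n} (hx : P r x ≠ 0)
    (hy : P r y ≠ 0) : x = y := by
  obtain ⟨s, F, rfl⟩ := hP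
  rw [Matrix.smul_apply, tensorOp, of_apply, smul_eq_mul] at hx hy
  funext i
  exact pauli1_eq_of_ne_zero (Finset.prod_ne_zero_iff.mp (right_ne_zero_of_mul hx) i (by simp))
    (Finset.prod_ne_zero_iff.mp (right_ne_zero_of_mul hy) i (by simp))

end PauliGroup

theorem mem_Ck_add_two {n k : ℕ} {U : Matrix (Q n) (Q n) ℂ} :
    U ∈ Ck n (k + 2) ↔
      U ∈ unitaryGroup (Q n) ℂ ∧ ∀ P ∈ PauliGroup n, U * P * Uᴴ ∈ Ck n (k + 1) :=
  Iff.rfl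

namespace Ck

variable {n : ℕ} {P : Matrix (Q n) (Q n) ℂ}

theorem mem_unitaryGroup :
    ∀ {k} {W : Matrix (Q n) (Q n) ℂ}, W ∈ Ck n k → W ∈ unitaryGroup (Q n) ℂ
  | 0, _, hW | 1, _, hW => PauliGroup.mem_unitaryGroup hW
  | _ + 2, _, hW => (mem_Ck_add_two.mp hW).1

theorem pauli_conj_mem (hP : P ∈ PauliGroup n) :
    ∀ {k} {W : Matrix (Q n) (Q n) ℂ}, W ∈ Ck n k → P * W * Pᴴ ∈ Ck n k
  | 0, _, hW | 1, _, hW =>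
    PauliGroup.mul_mem (PauliGroup.mul_mem hP hW) (PauliGroup.conjTranspose_mem hP)
  | _ + 2, W, hW => by
    have hPu := PauliGroup.mem_unitaryGroup hP
    obtain ⟨hWu, hWP⟩ := mem_Ck_add_two.mp hW
    refine mem_Ck_add_two.mpr ⟨mul_mem (mul_mem hPu hWu) (Unitary.star_mem hPu), fun R hR => ?_⟩
    have hPRP : Pᴴ * R * P ∈ PauliGroup n :=
      PauliGroup.mul_mem (PauliGroup.mul_mem (PauliGroup.conjTranspose_mem hP) hR) hP
    rw [show P * W * Pᴴ * R * (P * W * Pᴴ)ᴴ = P * (W * (Pᴴ * R * P) * Wᴴ) * Pᴴ by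
      simp only [conjTranspose_mul, conjTranspose_conjTranspose, mul_assoc]]
    exact pauli_conj_mem hP (hWP _ hPRP)

theorem pauli_mul_mem (hP : P ∈ PauliGroup n) {k : ℕ} {W : Matrix (Q n) (Q n) ℂ}
    (hW : W ∈ Ck n k) : P * W ∈ Ck n k :=
  match k, hW with
  | 0, hW | 1, hW => PauliGroup.mul_mem hP hW
  | _ + 2, hW => by
    obtain ⟨hWu, hWP⟩ := mem_Ck_add_two.mp hW
    refine mem_Ck_add_two.mpr ⟨mul_mem (PauliGroup.mem_unitaryGroup hP) hWu, fun R hR => ?_⟩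
    rw [show P * W * R * (P * W)ᴴ = P * (W * R * Wᴴ) * Pᴴ by
      simp only [conjTranspose_mul, mul_assoc]]
    exact pauli_conj_mem hP (hWP R hR)

end Ck

theorem PauliGroup.mem_Ck {n : ℕ} {P : Matrix (Q n) (Q n) ℂ} (hP : P ∈ PauliGroup n) :
    ∀ {k}, P ∈ Ck n k
  | 0 | 1 => hP
  | _ + 2 => mem_Ck_add_two.mpr ⟨mem_unitaryGroup hP, fun _ hR =>
      mem_Ck (mul_mem (mul_mem hP hR) (conjTranspose_mem hP))⟩

theorem mem_Fk {n k : ℕ} {U : Matrix (Q n) (Q n) ℂ} : U ∈ Fk n k ↔ U ∈ Ck n k ∧ U.IsDiag :=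
  Iff.rfl

namespace Fk

variable {n : ℕ} {U P : Matrix (Q n) (Q n) ℂ}

theorem exists_eq_pauli_mul {k : ℕ} (hU : U ∈ Fk n (k + 2)) (hP : P ∈ PauliGroup n) :
    ∃ D ∈ Fk n (k + 1), U * P * Uᴴ = P * D := by
  obtain ⟨hUC, hUd⟩ := mem_Fk.mp hU
  have hUPU : U * P * Uᴴ ∈ Ck n (k + 1) := (mem_Ck_add_two.mp hUC).2 P hP
  refine ⟨Pᴴ * (U * P * Uᴴ),
    mem_Fk.mpr ⟨Ck.pauli_mul_mem (PauliGroup.conjTranspose_mem hP) hUPU, ?_⟩, ?_⟩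
  · rw [show Pᴴ * (U * P * Uᴴ) = Pᴴ * U * P * Uᴴ by simp only [mul_assoc]]
    have hPUP : (Pᴴ * U * P).IsDiag :=
      hUd.conjTranspose_mul_mul fun _ _ _ => PauliGroup.eq_of_ne_zero hP
    exact hPUP.mul hUd.conjTranspose
  · have hPP : P * Pᴴ = 1 := Unitary.mul_star_self_of_mem (PauliGroup.mem_unitaryGroup hP)
    rw [← mul_assoc, hPP, one_mul]

theorem mul_mem :
    ∀ {k} {U V : Matrix (Q n) (Q n) ℂ}, U ∈ Fk n k → V ∈ Fk n k → U * V ∈ Fk n k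
  | 0, _, _, hU, hV | 1, _, _, hU, hV => ⟨PauliGroup.mul_mem hU.1 hV.1, hU.2.mul hV.2⟩
  | k + 2, U, V, hU, hV => by
    refine ⟨mem_Ck_add_two.mpr ⟨MulMemClass.mul_mem (Ck.mem_unitaryGroup hU.1)
      (Ck.mem_unitaryGroup hV.1), fun P hP => ?_⟩, hU.2.mul hV.2⟩
    obtain ⟨DU, hDU, hUP⟩ := exists_eq_pauli_mul hU hP
    obtain ⟨DV, hDV, hVP⟩ := exists_eq_pauli_mul hV hP
    have hUVP : U * V * P * (U * V)ᴴ = P * (DU * DV) := calc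
      U * V * P * (U * V)ᴴ = U * (P * DV) * Uᴴ := by
        rw [← hVP]; simp only [conjTranspose_mul, mul_assoc]
      _ = U * P * (DV * Uᴴ) := by simp only [mul_assoc]
      _ = U * P * Uᴴ * DV := by rw [(hDV.2.commute hU.2.conjTranspose).eq]; simp only [mul_assoc]
      _ = P * (DU * DV) := by rw [hUP, mul_assoc]
    rw [hUVP]
    exact Ck.pauli_mul_mem hP (mul_mem hDU hDV).1

theorem conjTranspose_mem : ∀ {k} {U : Matrix (Q n) (Q n) ℂ}, U ∈ Fk n k → Uᴴ ∈ Fk n k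
  | 0, _, hU | 1, _, hU => ⟨PauliGroup.conjTranspose_mem hU.1, hU.2.conjTranspose⟩
  | k + 2, U, hU => by
    have hUu := Ck.mem_unitaryGroup hU.1
    refine ⟨mem_Ck_add_two.mpr ⟨Unitary.star_mem hUu, fun P hP => ?_⟩, hU.2.conjTranspose⟩
    obtain ⟨D, hD, hUP⟩ := exists_eq_pauli_mul hU hP
    have hDD : D * Dᴴ = 1 := Unitary.mul_star_self_of_mem (Ck.mem_unitaryGroup hD.1)
    have hUU : Uᴴ * U = 1 := Unitary.star_mul_self_of_mem hUu
    have hUPU : Uᴴ * P * Uᴴᴴ = P * Dᴴ := calc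
      Uᴴ * P * Uᴴᴴ = Uᴴ * P * (U * D) * Dᴴ := by
        rw [conjTranspose_conjTranspose, mul_assoc _ (U * D), mul_assoc U, hDD, mul_one]
      _ = Uᴴ * (U * P * Uᴴ) * U * Dᴴ := by
        rw [(hU.2.commute hD.2).eq, hUP]; simp only [mul_assoc]
      _ = P * Dᴴ := by
        rw [show Uᴴ * (U * P * Uᴴ) * U = Uᴴ * U * P * (Uᴴ * U) by simp only [mul_assoc], hUU,
          one_mul, mul_one]
    rw [hUPU]
    exact Ck.pauli_mul_mem hP (conjTranspose_mem hD).1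

end Fk

theorem diagonal_Ck_is_group_general (n k : ℕ) :
    (1 : Matrix (Q n) (Q n) ℂ) ∈ Fk n k ∧
    (∀ U V, U ∈ Fk n k → V ∈ Fk n k → U * V ∈ Fk n k) ∧
    (∀ U, U ∈ Fk n k → Uᴴ ∈ Fk n k) :=
  ⟨⟨PauliGroup.mem_Ck PauliGroup.one_mem, isDiag_one⟩, fun _ _ => Fk.mul_mem,
    fun _ => Fk.conjTranspose_mem⟩

/-- for every `k ≥ 2`, the diagonal gates in `C_k` form a group:
they contain the identity and are closed under products and inverses
(for a diagonal unitary, the inverse is `Uᴴ`). -/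
theorem diagonal_Ck_is_group (n k : ℕ) (hk : 2 ≤ k) :
    (1 : Matrix (Q n) (Q n) ℂ) ∈ Fk n k ∧
    (∀ U V, U ∈ Fk n k → V ∈ Fk n k → U * V ∈ Fk n k) ∧
    (∀ U, U ∈ Fk n k → Uᴴ ∈ Fk n k) :=
  diagonal_Ck_is_group_general n k
end

section
/- If A ∈ C_3 is an n-qubit diagonal unitary with A_{11} = 1, then every diagonal entry of A is an 8th root of unity: A_{jj} = e^{i m_j π/4} for some integers m_j. -/
open Matrix Complex

lemma pauliX_entry (b x y : Fin 2) :
    pauli1 (if b = 1 then 1 else 0) x y = if y = x + b then 1 else 0 := by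
  fin_cases b <;> fin_cases x <;> fin_cases y <;>
    simp [pauli1, Matrix.one_apply]

lemma pauli_entry_pow5 (k : Fin 4) (x y : Fin 2) :
    (pauli1 k x y) ^ 5 = pauli1 k x y := by
  fin_cases k <;> fin_cases x <;> fin_cases y <;>
    norm_num [pauli1, Matrix.one_apply, pow_succ, Complex.I_mul_I]

lemma Q_add_self {n : ℕ} (j : Q n) : j + j = 0 := by
  funext i
  have h : ∀ a : Fin 2, a + a = 0 := by decide
  exact h (j i)

/-- a diagonal `n`-qubit gate in `C_3`, normalized so that its
first diagonal entry is `1`, has all diagonal entries 8th roots of unity: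
`A_jj = e^{i m_j π/4}` for integers `m_j`. -/
theorem diagonal_C3_entries_eighth_roots (n : ℕ) (A : Matrix (Q n) (Q n) ℂ)
    (hA : A ∈ Ck n 3) (hdiag : A.IsDiag)
    (h11 : A (fun _ => 0) (fun _ => 0) = 1) :
    ∀ j : Q n, ∃ m : ℤ, A j j = Complex.exp ((m : ℂ) * (Real.pi : ℂ) * Complex.I / 4) := by
  intro j
  obtain ⟨hU, hC⟩ := hA
  have h110 : A 0 0 = 1 := h11
  -- the Pauli X^{⊗ supp j}
  set P : Matrix (Q n) (Q n) ℂ :=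
    tensorOp fun i => pauli1 (if j i = 1 then 1 else 0) with hPdef
  have hxjj : ∀ x : Q n, x + j + j = x := by
    intro x; rw [add_assoc, Q_add_self, add_zero]
  have hP : ∀ x y : Q n, P x y = if y = x + j then 1 else 0 := by
    intro x y
    show ∏ i, pauli1 (if j i = 1 then 1 else 0) (x i) (y i) = _
    by_cases h : y = x + j
    · subst h; rw [if_pos rfl]
      exact Finset.prod_eq_one fun i _ => by rw [pauliX_entry]; simp
    · rw [if_neg h]
      obtain ⟨i, hi⟩ : ∃ i, y i ≠ x i + j i := by
        by_contra hc; push_neg at hc; exact h (funext hc)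
      exact Finset.prod_eq_zero (Finset.mem_univ i)
        (by rw [pauliX_entry]; exact if_neg hi)
  have hPcond : ∀ x y : Q n, (y = x + j) ↔ (x = y + j) := by
    intro x y
    constructor <;> (intro h; rw [h, hxjj])
  have hPmem : P ∈ PauliGroup n := ⟨0, fun i => if j i = 1 then 1 else 0, by simp [hPdef]⟩
  -- P is Hermitian
  have hPH : Pᴴ = P := by
    ext x y
    rw [Matrix.conjTranspose_apply, hP, hP]
    by_cases h : x = y + j
    · rw [if_pos h, if_pos ((hPcond x y).mpr h)]; simp
    · rw [if_neg h, if_neg (fun hy => h ((hPcond x y).mp hy))]; simp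
  -- entry computation lemmas
  have hPmul : ∀ (B : Matrix (Q n) (Q n) ℂ) (x y : Q n), (P * B) x y = B (x + j) y := by
    intro B x y
    rw [Matrix.mul_apply]
    rw [Finset.sum_congr rfl fun z _ => by rw [hP x z]]
    simp [ite_mul]
  have hAmul : ∀ (B : Matrix (Q n) (Q n) ℂ) (x y : Q n), (A * B) x y = A x x * B x y := by
    intro B x y
    rw [Matrix.mul_apply]
    exact Finset.sum_eq_single x (fun z _ hz => by rw [hdiag (Ne.symm hz), zero_mul])
      (fun h => absurd (Finset.mem_univ x) h)
  have hAHmul : ∀ (B : Matrix (Q n) (Q n) ℂ) (x y : Q n),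
      (Aᴴ * B) x y = star (A x x) * B x y := by
    intro B x y
    rw [Matrix.mul_apply, ← Matrix.conjTranspose_apply A x x]
    refine Finset.sum_eq_single x (fun z _ hz => ?_) (fun h => absurd (Finset.mem_univ x) h)
    rw [Matrix.conjTranspose_apply, hdiag hz, star_zero, zero_mul]
  -- the conjugated matrix M
  have hB : A * P * Aᴴ ∈ Ck n 2 := hC P hPmem
  obtain ⟨hBU, hBC⟩ := hB
  have hM : (A * P * Aᴴ) * P * (A * P * Aᴴ)ᴴ ∈ PauliGroup n := hBC P hPmem
  set M : Matrix (Q n) (Q n) ℂ := (A * P * Aᴴ) * P * (A * P * Aᴴ)ᴴ with hMdef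
  have hMeq : M = A * (P * (Aᴴ * (P * (A * (P * Aᴴ))))) := by
    rw [hMdef]
    simp only [Matrix.conjTranspose_mul, Matrix.conjTranspose_conjTranspose, hPH,
      Matrix.mul_assoc]
  -- key value
  have hMj0 : M j 0 = (A j j) ^ 2 := by
    rw [hMeq, hAmul, hPmul, hAHmul, hPmul, hxjj, hAmul, hPmul, Q_add_self,
      Matrix.conjTranspose_apply, h110]
    simp
    ring
  -- nonvanishing of the diagonal entry
  have hd0 : A j j ≠ 0 := by
    have h1 : (A * star A) j j = 1 := by rw [Matrix.mem_unitaryGroup_iff.mp hU]; simp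
    have h2 : (A * star A) j j = A j j * star (A j j) := by
      rw [Matrix.star_eq_conjTranspose, Matrix.mul_apply, ← Matrix.conjTranspose_apply A j j]
      refine Finset.sum_eq_single j (fun z _ hz => ?_) (fun h => absurd (Finset.mem_univ j) h)
      rw [hdiag (Ne.symm hz), zero_mul]
    intro h0
    rw [h2, h0, zero_mul] at h1
    exact zero_ne_one h1
  -- M j 0 is a fourth root of unity
  obtain ⟨s, f, hMP⟩ := hM
  have hMval : M j 0 = Complex.I ^ (s : ℕ) * ∏ i, pauli1 (f i) (j i) 0 := by
    rw [hMP]; rfl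
  have hw5 : (M j 0) ^ 5 = M j 0 := by
    rw [hMval, mul_pow, ← pow_mul, mul_comm (s : ℕ) 5, pow_mul]
    have hI5 : Complex.I ^ 5 = Complex.I := by
      norm_num [pow_succ, Complex.I_mul_I]
    rw [hI5, ← Finset.prod_pow]
    congr 1
    exact Finset.prod_congr rfl fun i _ => pauli_entry_pow5 (f i) (j i) 0
  have hwne : M j 0 ≠ 0 := by
    rw [hMj0]; exact pow_ne_zero 2 hd0
  have hw4 : (M j 0) ^ 4 = 1 := by
    have : (M j 0) ^ 4 * M j 0 = 1 * M j 0 := by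
      rw [one_mul, ← pow_succ]; exact hw5
    exact mul_right_cancel₀ hwne this
  have hz8 : (A j j) ^ 8 = 1 := by
    have : (A j j) ^ 8 = ((A j j) ^ 2) ^ 4 := by ring
    rw [this, ← hMj0, hw4]
  -- extract the eighth root of unity
  obtain ⟨i, _, hzi⟩ :=
    (Complex.isPrimitiveRoot_exp 8 (by norm_num)).eq_pow_of_pow_eq_one hz8
  refine ⟨(i : ℤ), ?_⟩
  rw [← hzi, ← Complex.exp_nat_mul]
  congr 1
  push_cast
  ring
end

section
/- More generally, if A ∈ C_k is an n-qubit diagonal unitary with A_{11} = 1, then every diagonal entry of A is a 2^k-th root of unity: A_{jj} = e^{i m_j π/2^{k-1}} for integers m_j. -/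
/-! Write a diagonal gate, more generally any monomial matrix, as `U = diagonal d * X^s`.
Conjugating `X^t` by `U` gives `diagonal (z ↦ d z * conj (d (z + t))) * X^t`, one level lower in
the hierarchy; for `t = x + y` its ratio of the entries at `x` and `y` is the square of the ratio
`d x * conj (d y)` of `U`. On Paulis, the bottom level, all these ratios are
`±1`, so every ratio of a monomial matrix in `C_k` is a `2^k`-th root of unity. -/

open Matrix Complex

lemma Q.add_self {n : ℕ} (x : Q n) : x + x = 0 := by
  funext i
  have : ∀ a : Fin 2, a + a = 0 := by decide
  exact this (x i)

/-- The monomial matrix `diagonal d * X^s`, where `X^s` permutes basis states by `x ↦ x + s`. -/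
def shiftDiag {G R : Type*} [Add G] [DecidableEq G] [Zero R] (d : G → R) (s : G) :
    Matrix G G R :=
  Matrix.of fun x y => if x + s = y then d x else 0

section shiftDiag

variable {G R : Type*} [AddCommGroup G] [DecidableEq G]

lemma shiftDiag_zero [Zero R] (d : G → R) : shiftDiag d 0 = diagonal d := by
  ext x y
  simp [shiftDiag, diagonal_apply]

lemma shiftDiag_mul [Fintype G] [NonUnitalNonAssocSemiring R] (d d' : G → R) (s t : G) :
    shiftDiag d s * shiftDiag d' t = shiftDiag (fun x => d x * d' (x + s)) (s + t) := by
  ext x z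
  simp only [mul_apply, shiftDiag, of_apply]
  rw [Finset.sum_eq_single (x + s)]
  · simp [add_assoc]
  · intro y _ hy
    simp [Ne.symm hy]
  · simp

lemma shiftDiag_conjTranspose [AddMonoid R] [StarAddMonoid R] (d : G → R) (s : G) :
    (shiftDiag d s)ᴴ = shiftDiag (fun x => star (d (x - s))) (-s) := by
  ext x y
  have hxy : y + s = x ↔ x + -s = y := by
    rw [← sub_eq_add_neg, sub_eq_iff_eq_add, eq_comm]
  by_cases h : x + -s = y
  · rw [← sub_eq_add_neg] at h
    subst h
    simp [shiftDiag, sub_eq_add_neg]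
  · simp [shiftDiag, h, hxy]

lemma shiftDiag_apply_ne_zero_of_mem_unitaryGroup [Fintype G] [CommRing R] [StarRing R]
    [Nontrivial R] {d : G → R} {s : G} (hU : shiftDiag d s ∈ unitaryGroup G R) (x : G) :
    d x ≠ 0 := by
  intro hx
  have hrow : ∀ y, shiftDiag d s x y = 0 := fun y => by simp [shiftDiag, hx]
  have h := congrFun (congrFun (mem_unitaryGroup_iff.mp hU) x) x
  simp [mul_apply, hrow] at h

lemma shiftDiag_mul_one_mul_conjTranspose [Fintype G] [CommSemiring R] [StarRing R]
    (d : G → R) (s t : G) :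
    shiftDiag d s * shiftDiag (fun _ => 1) t * (shiftDiag d s)ᴴ =
      shiftDiag (fun z => d z * star (d (z + t))) t := by
  rw [shiftDiag_conjTranspose, shiftDiag_mul, shiftDiag_mul]
  congr 1
  · funext z
    rw [mul_one, show z + (s + t) - s = z + t by abel]
  · abel

end shiftDiag

lemma shiftDiag_one_mem_pauliGroup {n : ℕ} (t : Q n) :
    shiftDiag (fun _ => (1 : ℂ)) t ∈ PauliGroup n := by
  refine ⟨0, fun i => if t i = 0 then 0 else 1, ?_⟩
  have hX : ∀ a b c : Fin 2, pauli1 (if c = 0 then 0 else 1) a b = if a + c = b then 1 else 0 := by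
    intro a b c
    fin_cases a <;> fin_cases b <;> fin_cases c <;> simp [pauli1]
  ext x y
  simp only [shiftDiag, of_apply, Fin.val_zero, pow_zero, one_smul, tensorOp, hX,
    Finset.prod_boole, funext_iff, Pi.add_apply, Finset.mem_univ, forall_const]

lemma pauli1_mul_star_sq (g : Fin 4) (s a b c : Fin 2) (ha : pauli1 g a (a + s) ≠ 0) :
    (pauli1 g b (b + s) * star (pauli1 g c (c + s))) ^ 2 = 1 := by
  fin_cases g <;> fin_cases s <;> fin_cases a <;> fin_cases b <;> fin_cases c <;>
    simp_all [pauli1, Complex.ext_iff, pow_two]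

lemma mul_star_sq_eq_one_of_shiftDiag_mem_pauliGroup {n : ℕ} {d : Q n → ℂ} {s : Q n}
    (hP : shiftDiag d s ∈ PauliGroup n) {x₀ : Q n} (hx₀ : d x₀ ≠ 0) (x y : Q n) :
    (d x * star (d y)) ^ 2 = 1 := by
  obtain ⟨p, f, hpf⟩ := hP
  have hd : ∀ z, d z = I ^ (p : ℕ) * ∏ i, pauli1 (f i) (z i) (z i + s i) := fun z => by
    simpa [shiftDiag, tensorOp] using congrFun (congrFun hpf z) (z + s)
  have hfactor : ∀ i, pauli1 (f i) (x₀ i) (x₀ i + s i) ≠ 0 := fun i => by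
    rw [hd] at hx₀
    exact Finset.prod_ne_zero_iff.mp (right_ne_zero_of_mul hx₀) i (Finset.mem_univ i)
  have hphase : I ^ (p : ℕ) * star (I ^ (p : ℕ)) = 1 := by
    rw [star_pow, ← mul_pow]
    simp
  have hprod : d x * star (d y) =
      ∏ i, pauli1 (f i) (x i) (x i + s i) * star (pauli1 (f i) (y i) (y i + s i)) := by
    rw [Finset.prod_mul_distrib, hd x, hd y, star_mul, star_prod]
    linear_combination (∏ i, pauli1 (f i) (x i) (x i + s i)) *
      (∏ i, star (pauli1 (f i) (y i) (y i + s i))) * hphase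
  rw [hprod, ← Finset.prod_pow]
  exact Finset.prod_eq_one fun i _ => pauli1_mul_star_sq _ _ _ _ _ (hfactor i)

lemma mul_star_pow_eq_one_of_shiftDiag_mem_Ck {n : ℕ} (e : ℕ) {d : Q n → ℂ} {s : Q n}
    (hC : shiftDiag d s ∈ Ck n (e + 1)) {x₀ : Q n} (hx₀ : d x₀ ≠ 0) (x y : Q n) :
    (d x * star (d y)) ^ 2 ^ (e + 1) = 1 := by
  induction e generalizing d s x₀ x y with
  | zero => simpa using mul_star_sq_eq_one_of_shiftDiag_mem_pauliGroup hC hx₀ x y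
  | succ e ih =>
    obtain ⟨hU, hconj⟩ := hC
    have hC' := hconj _ (shiftDiag_one_mem_pauliGroup (x + y))
    rw [shiftDiag_mul_one_mul_conjTranspose] at hC'
    have hd := shiftDiag_apply_ne_zero_of_mem_unitaryGroup hU
    have hsq := ih hC' (mul_ne_zero (hd x) (star_ne_zero.mpr (hd _))) x y
    rw [show x + (x + y) = y by rw [← add_assoc, Q.add_self, zero_add],
      show y + (x + y) = x by rw [add_comm x, ← add_assoc, Q.add_self, zero_add]] at hsq
    rw [pow_succ', pow_mul]
    convert hsq using 2
    rw [star_mul, star_star]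
    ring

lemma exists_int_eq_exp_of_pow_two_pow_eq_one {z : ℂ} (e : ℕ) (h : z ^ 2 ^ (e + 1) = 1) :
    ∃ m : ℤ, z = exp (m * Real.pi * I / 2 ^ e) := by
  obtain ⟨i, -, hi⟩ :=
    (Complex.isPrimitiveRoot_exp (2 ^ (e + 1)) (by positivity)).eq_pow_of_pow_eq_one h
  refine ⟨i, ?_⟩
  rw [← hi, ← Complex.exp_nat_mul]
  congr 1
  push_cast
  field_simp
  ring

/-- a diagonal `n`-qubit gate in `C_k` (`k ≥ 1`), normalized so
that its first diagonal entry is `1`, has all diagonal entries `2^k`-th roots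
of unity: `A_jj = e^{i m_j π/2^{k-1}}` for integers `m_j`. -/
theorem diagonal_Ck_entries_roots_of_unity (n k : ℕ) (hk : 1 ≤ k)
    (A : Matrix (Q n) (Q n) ℂ) (hA : A ∈ Ck n k) (hdiag : A.IsDiag)
    (h11 : A (fun _ => 0) (fun _ => 0) = 1) :
    ∀ j : Q n, ∃ m : ℤ,
      A j j = Complex.exp ((m : ℂ) * (Real.pi : ℂ) * Complex.I / 2 ^ (k - 1)) := by
  obtain ⟨e, rfl⟩ : ∃ e, k = e + 1 := ⟨k - 1, by omega⟩
  have hC : shiftDiag A.diag 0 ∈ Ck n (e + 1) := by rwa [shiftDiag_zero, hdiag.diagonal_diag]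
  have h0 : A.diag 0 = 1 := h11
  intro j
  have hpow := mul_star_pow_eq_one_of_shiftDiag_mem_Ck e hC (x₀ := 0) (h0 ▸ one_ne_zero) j 0
  rw [h0, star_one, mul_one] at hpow
  simpa using exists_int_eq_exp_of_pow_two_pow_eq_one e hpow
end
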